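/- Let H be the Hilbert transform and define φ_H(t) = sup{‖H‖_{L¹(w)→L^{1,∞}(w)} : [w]_{A₁} ≤ t}. Let w be a weight with σ = w^{-1} and ‖M‖_{L²(σ)→L²(σ)} < ∞. Then ‖Hf‖_{L^{2,∞}(w)} ≤ 2 φ_H(2‖M‖_{L²(σ)→L²(σ)}) ‖f‖_{L²(w)} for all f ∈ L²(w). -/

import Mathlib

open MeasureTheory ENNReal

/-- The Hilbert transform `Hf(x) = p.v. ∫ f(y)/(x-y) dy`. -/
noncomputable def hilbert (f : ℝ → ℝ) (x : ℝ) : ℝ :=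
  Filter.limUnder (nhdsWithin (0:ℝ) (Set.Ioi 0))
    (fun ε => ∫ y in {y : ℝ | ε < |x - y|}, f y / (x - y))

/-- Hardy–Littlewood maximal operator (ℝ≥0∞-valued). -/
noncomputable def MR (f : ℝ → ℝ≥0∞) : ℝ → ℝ≥0∞ := fun x =>
  ⨆ (a : ℝ) (b : ℝ) (_ : a < b) (_ : x ∈ Set.Ico a b),
    (∫⁻ y in Set.Ico a b, f y) / ENNReal.ofReal (b - a)

/-- Maximal operator of a real-valued function. -/
noncomputable def Mreal (f : ℝ → ℝ) : ℝ → ℝ≥0∞ :=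
  MR fun y => ENNReal.ofReal |f y|

/-- Weighted `L²(v)` norm of a real function. -/
noncomputable def l2w (v f : ℝ → ℝ) : ℝ≥0∞ :=
  (∫⁻ x, (ENNReal.ofReal |f x|) ^ 2 * ENNReal.ofReal (v x)) ^ (1/2 : ℝ)

/-- The operator norm `‖M‖_{L²(σ)→L²(σ)}`. -/
noncomputable def Mopnorm (σ : ℝ → ℝ) : ℝ≥0∞ :=
  ⨆ (f : ℝ → ℝ) (_ : l2w σ f ≤ 1),
    (∫⁻ x, (Mreal f x) ^ 2 * ENNReal.ofReal (σ x)) ^ (1/2 : ℝ)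

/-- The `A₁` constant `[w]_{A₁} = ‖Mw/w‖_{L^∞}`. -/
noncomputable def A1const (w : ℝ → ℝ) : ℝ≥0∞ :=
  essSup (fun x => Mreal w x / ENNReal.ofReal (w x)) volume

/-- Weak `L¹(w)` norm. -/
noncomputable def weakL1norm (w g : ℝ → ℝ) : ℝ≥0∞ :=
  ⨆ (α : ℝ) (_ : 0 < α),
    ENNReal.ofReal α * ∫⁻ x in {x : ℝ | α < |g x|}, ENNReal.ofReal (w x)

/-- `L¹(w)` norm. -/
noncomputable def l1w (w f : ℝ → ℝ) : ℝ≥0∞ :=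
  ∫⁻ x, ENNReal.ofReal |f x| * ENNReal.ofReal (w x)

/-- The norm `‖H‖_{L¹(w)→L^{1,∞}(w)}`. -/
noncomputable def Hopnorm (w : ℝ → ℝ) : ℝ≥0∞ :=
  ⨆ (f : ℝ → ℝ) (_ : l1w w f ≤ 1), weakL1norm w (hilbert f)

/-- `φ_H(t) = sup { ‖H‖_{L¹(w)→L^{1,∞}(w)} : [w]_{A₁} ≤ t }`. -/
noncomputable def phiH (t : ℝ≥0∞) : ℝ≥0∞ :=
  ⨆ (w : ℝ → ℝ) (_ : 0 ≤ w) (_ : A1const w ≤ t), Hopnorm w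

/-- Weak `L²(w)` norm. -/
noncomputable def weakL2norm (w g : ℝ → ℝ) : ℝ≥0∞ :=
  ⨆ (α : ℝ) (_ : 0 < α),
    ENNReal.ofReal α * (∫⁻ x in {x : ℝ | α < |g x|}, ENNReal.ofReal (w x)) ^ (1/2 : ℝ)

/-!
Rubio de Francia extrapolation. For bounded `g ≥ 0` with `‖g‖_{L²(σ)} < ∞`, the series
`ℛg = ∑ₖ (2‖M‖)⁻ᵏ Mᵏg` dominates `g`, satisfies `M(ℛg) ≤ 2‖M‖ ℛg` (so `[ℛg]_{A₁} ≤ 2‖M‖`) and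
`‖ℛg‖_{L²(σ)} ≤ 2‖g‖_{L²(σ)}`. With `E = {|Hf| > α}`, the weak type `(1,1)` bound for the weight
`ℛg` and Cauchy–Schwarz (using `wσ = 1`) give
`α ∫_E g ≤ α ℛg(E) ≤ φ_H(2‖M‖) ∫ |f| ℛg ≤ 2 φ_H(2‖M‖) ‖f‖_{L²(w)} ‖g‖_{L²(σ)}`,
and testing with truncations of `g = w 1_E` yields `α w(E)^{1/2} ≤ 2 φ_H(2‖M‖) ‖f‖_{L²(w)}`.

Since `0⁻¹ = 0`, `σ` vanishes where `w` does; finiteness of `‖M‖` then forces `w > 0` a.e. unless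
`w = 0` a.e. Lebesgue differentiation gives `‖M‖ ≥ 1`, which makes the series for `ℛg` converge.
-/

open Set Filter Topology

lemma le_MR {u : ℝ → ℝ≥0∞} {x a b : ℝ} (hab : a < b) (hx : x ∈ Ico a b) :
    (∫⁻ y in Ico a b, u y) / ENNReal.ofReal (b - a) ≤ MR u x :=
  le_iSup₂_of_le a b <| le_iSup₂_of_le (f := fun _ _ => _) hab hx le_rfl

lemma MR_le_iff {u : ℝ → ℝ≥0∞} {x : ℝ} {c : ℝ≥0∞} :
    MR u x ≤ c ↔ ∀ a b, a < b → x ∈ Ico a b →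
      (∫⁻ y in Ico a b, u y) / ENNReal.ofReal (b - a) ≤ c := by
  simp only [MR, iSup_le_iff]

lemma MR_const_mul {c : ℝ≥0∞} (hc : c ≠ ⊤) (u : ℝ → ℝ≥0∞) :
    MR (fun x => c * u x) = fun x => c * MR u x := by
  ext x
  unfold MR
  simp only [ENNReal.mul_iSup, lintegral_const_mul' c _ hc, mul_div_assoc]

lemma MR_le_of_le {u : ℝ → ℝ≥0∞} {c : ℝ≥0∞} (h : ∀ y, u y ≤ c) (x : ℝ) : MR u x ≤ c := by
  refine MR_le_iff.2 fun a b hab _ => ENNReal.div_le_of_le_mul ?_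
  calc ∫⁻ y in Ico a b, u y ≤ ∫⁻ _ in Ico a b, c := lintegral_mono h
    _ = c * ENNReal.ofReal (b - a) := by rw [setLIntegral_const, Real.volume_Ico]

lemma MR_tsum_le {u : ℕ → ℝ → ℝ≥0∞} (hu : ∀ k, AEMeasurable (u k)) (x : ℝ) :
    MR (fun y => ∑' k, u k y) x ≤ ∑' k, MR (u k) x := by
  refine MR_le_iff.2 fun a b hab hx => ?_
  rw [lintegral_tsum fun k => (hu k).restrict, div_eq_mul_inv, ← ENNReal.tsum_mul_right]
  exact ENNReal.tsum_le_tsum fun k => by simpa only [div_eq_mul_inv] using le_MR hab hx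

lemma MR_ne_zero {u : ℝ → ℝ≥0∞} (hu : ∫⁻ y, u y ≠ 0) (x : ℝ) : MR u x ≠ 0 := by
  set I : ℕ → Set ℝ := fun n => Ico (x - (n + 1)) (x + (n + 1))
  have hI : ⋃ n, I n = univ := by
    refine eq_univ_of_forall fun y => mem_iUnion.2 ?_
    obtain ⟨n, hn⟩ := exists_nat_gt |y - x|
    exact ⟨n, by constructor <;> linarith [abs_lt.1 (hn.trans (lt_add_one (n : ℝ)))]⟩
  have hmono : Monotone I := fun m n hmn => Ico_subset_Ico (by gcongr) (by gcongr)
  rw [← setLIntegral_univ, ← hI, setLIntegral_iUnion_of_directed _ hmono.directed_le] at hu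
  obtain ⟨n, hn⟩ : ∃ n, ∫⁻ y in I n, u y ≠ 0 := by
    by_contra! h
    simp [h] at hu
  exact (ENNReal.div_pos hn ENNReal.ofReal_ne_top).trans_le
    (le_MR (by linarith) ⟨by linarith, by linarith⟩) |>.ne'

lemma MR_eq_iSup_rat (u : ℝ → ℝ≥0∞) (x : ℝ) :
    MR u x = ⨆ (p : ℚ) (q : ℚ) (_ : (p : ℝ) < q) (_ : x ∈ Ico (p : ℝ) q),
      (∫⁻ y in Ico (p : ℝ) q, u y) / ENNReal.ofReal (q - p) := by
  refine le_antisymm (MR_le_iff.2 fun a b hab hx => ?_)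
    (iSup₂_le fun p q => iSup₂_le fun hpq hx => le_MR hpq hx)
  set I := ∫⁻ y in Ico a b, u y
  have hlim : Tendsto (fun δ : ℝ => I / ENNReal.ofReal (b - a + 2 * δ)) (𝓝[>] 0)
      (𝓝 (I / ENNReal.ofReal (b - a))) := by
    have h : Tendsto (fun δ : ℝ => ENNReal.ofReal (b - a + 2 * δ)) (𝓝[>] 0)
        (𝓝 (ENNReal.ofReal (b - a))) := by
      refine (ENNReal.continuous_ofReal.tendsto _).comp ?_ |>.mono_left nhdsWithin_le_nhds
      exact (by fun_prop : Continuous fun δ : ℝ => b - a + 2 * δ).tendsto' 0 _ (by simp)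
    exact ENNReal.Tendsto.div tendsto_const_nhds (Or.inr (by simpa using hab)) h
      (Or.inl ENNReal.ofReal_ne_top)
  refine le_of_tendsto hlim (eventually_nhdsWithin_of_forall fun δ (hδ : 0 < δ) => ?_)
  -- enlarge `[a, b)` to a rational interval `[p, q)` of length at most `b - a + 2δ`
  obtain ⟨p, hp⟩ := exists_rat_btwn (show a - δ < a by linarith)
  obtain ⟨q, hq⟩ := exists_rat_btwn (show b < b + δ by linarith)
  refine le_iSup₂_of_le p q <| le_iSup₂_of_le (f := fun _ _ => _) (by linarith)
    ⟨by linarith [hx.1], by linarith [hx.2]⟩ ?_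
  exact ENNReal.div_le_div (lintegral_mono_set (Ico_subset_Ico hp.2.le hq.1.le))
    (ENNReal.ofReal_le_ofReal (by linarith))

@[fun_prop]
lemma measurable_MR (u : ℝ → ℝ≥0∞) : Measurable (MR u) := by
  classical
  rw [show MR u = _ from funext (MR_eq_iSup_rat u)]
  refine Measurable.iSup fun p => Measurable.iSup fun q => ?_
  refine Measurable.iSup_Prop _ ?_
  simp_rw [iSup_eq_if]
  exact Measurable.ite measurableSet_Ico measurable_const measurable_const

lemma ae_one_le_MR_indicator {S : Set ℝ} (hS : MeasurableSet S) :
    ∀ᵐ x, x ∈ S → 1 ≤ MR (S.indicator 1) x := by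
  have h := Besicovitch.ae_tendsto_measure_inter_div (volume : Measure ℝ) S
  rw [ae_restrict_iff' hS] at h
  filter_upwards [h] with x hx hxS
  refine le_of_tendsto (hx hxS) (eventually_nhdsWithin_of_forall fun r (hr : 0 < r) => ?_)
  calc volume (S ∩ Metric.closedBall x r) / volume (Metric.closedBall x r)
      = (∫⁻ y in Ico (x - r) (x + r), S.indicator 1 y) / ENNReal.ofReal (x + r - (x - r)) := by
        rw [lintegral_indicator_one hS, Measure.restrict_apply hS, Real.closedBall_eq_Icc,
          Real.volume_Icc,
          measure_congr ((ae_eq_refl S).inter (Ico_ae_eq_Icc (μ := volume)))]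
    _ ≤ MR (S.indicator 1) x := le_MR (by linarith) ⟨by linarith, by linarith⟩

-- `l2w σ f` is `l2wENN σ (fun x => ENNReal.ofReal |f x|)` by definition.
noncomputable def l2wENN (σ : ℝ → ℝ) (u : ℝ → ℝ≥0∞) : ℝ≥0∞ :=
  (∫⁻ x, u x ^ 2 * ENNReal.ofReal (σ x)) ^ (1/2 : ℝ)

lemma eLpNorm'_tsum_le {α : Type*} [MeasurableSpace α] {μ : Measure α} {p : ℝ} (hp : 1 ≤ p)
    {u : ℕ → α → ℝ≥0∞} (hu : ∀ k, AEMeasurable (u k) μ) :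
    eLpNorm' (fun x => ∑' k, u k x) p μ ≤ ∑' k, eLpNorm' (u k) p μ := by
  have hp0 : 0 < p := zero_lt_one.trans_le hp
  set S := ∑' k, eLpNorm' (u k) p μ
  have hpartial : ∀ m, ∫⁻ x, (∑ k ∈ Finset.range m, u k x) ^ p ∂μ ≤ S ^ p := by
    intro m
    have h := (eLpNorm'_sum_le (fun k _ => (hu k).aestronglyMeasurable) hp).trans
      (ENNReal.sum_le_tsum (Finset.range m))
    rw [eLpNorm'_eq_lintegral_enorm, one_div, ENNReal.rpow_inv_le_iff hp0] at h
    simpa only [Finset.sum_apply, enorm_eq_self] using h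
  have hsup : ∀ x, (∑' k, u k x) ^ p = ⨆ m, (∑ k ∈ Finset.range m, u k x) ^ p := fun x => by
    rw [ENNReal.tsum_eq_iSup_nat]
    exact (ENNReal.orderIsoRpow p hp0).map_iSup _
  rw [eLpNorm'_eq_lintegral_enorm, one_div, ENNReal.rpow_inv_le_iff hp0]
  simp only [enorm_eq_self, hsup]
  rw [lintegral_iSup' (fun m => (Finset.aemeasurable_fun_sum _ fun k _ => hu k).pow_const p)
    (ae_of_all _ fun x m n hmn => ENNReal.rpow_le_rpow
      (Finset.sum_le_sum_of_subset (Finset.range_subset_range.2 hmn)) hp0.le)]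
  exact iSup_le hpartial

lemma l2wENN_eq_eLpNorm' (σ : ℝ → ℝ) (u : ℝ → ℝ≥0∞) :
    l2wENN σ u = eLpNorm' (fun x => u x * ENNReal.ofReal (σ x) ^ (1/2 : ℝ)) 2 volume := by
  rw [l2wENN, eLpNorm'_eq_lintegral_enorm]
  congr 1
  refine lintegral_congr fun x => ?_
  rw [enorm_eq_self, ENNReal.mul_rpow_of_nonneg _ _ zero_le_two, ← ENNReal.rpow_mul]
  norm_num

lemma l2wENN_const_mul (σ : ℝ → ℝ) {c : ℝ≥0∞} (hc : c ≠ ⊤) (u : ℝ → ℝ≥0∞) :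
    l2wENN σ (fun x => c * u x) = c * l2wENN σ u := by
  simp only [l2wENN, mul_pow, mul_assoc]
  rw [lintegral_const_mul' _ _ (pow_ne_top hc), ENNReal.mul_rpow_of_nonneg _ _ (by norm_num),
    ← ENNReal.rpow_natCast, ← ENNReal.rpow_mul]
  norm_num

lemma l2wENN_mono_ae (σ : ℝ → ℝ) {u v : ℝ → ℝ≥0∞} (h : ∀ᵐ x, u x ≤ v x) :
    l2wENN σ u ≤ l2wENN σ v := by
  unfold l2wENN
  gcongr ?_ ^ _
  exact lintegral_mono_ae (h.mono fun x hx => by gcongr)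

lemma l2wENN_tsum_le {σ : ℝ → ℝ} (hσ : Measurable σ) {u : ℕ → ℝ → ℝ≥0∞}
    (hu : ∀ k, Measurable (u k)) :
    l2wENN σ (fun x => ∑' k, u k x) ≤ ∑' k, l2wENN σ (u k) := by
  simp_rw [l2wENN_eq_eLpNorm', ← ENNReal.tsum_mul_right]
  exact eLpNorm'_tsum_le one_le_two fun k =>
    ((hu k).mul (hσ.ennreal_ofReal.pow_const _)).aemeasurable

lemma l2wENN_indicator_one (σ : ℝ → ℝ) {S : Set ℝ} (hS : MeasurableSet S) :
    l2wENN σ (S.indicator 1) = (∫⁻ x in S, ENNReal.ofReal (σ x)) ^ (1/2 : ℝ) := by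
  rw [l2wENN, ← lintegral_indicator hS]
  congr 2 with x
  by_cases hx : x ∈ S <;> simp [hx]

lemma lintegral_mul_le_l2wENN_mul {w σ : ℝ → ℝ} (hw : Measurable w) (hσ : Measurable σ)
    (hwσ : ∀ᵐ x, ENNReal.ofReal (w x) * ENNReal.ofReal (σ x) = 1) {a b : ℝ → ℝ≥0∞}
    (ha : AEMeasurable a) (hb : AEMeasurable b) :
    ∫⁻ x, a x * b x ≤ l2wENN w a * l2wENN σ b := by
  rw [l2wENN_eq_eLpNorm', l2wENN_eq_eLpNorm', eLpNorm'_eq_lintegral_enorm,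
    eLpNorm'_eq_lintegral_enorm]
  simp only [enorm_eq_self]
  calc ∫⁻ x, a x * b x
      = ∫⁻ x, (a x * ENNReal.ofReal (w x) ^ (1/2 : ℝ)) *
          (b x * ENNReal.ofReal (σ x) ^ (1/2 : ℝ)) := by
        refine lintegral_congr_ae (hwσ.mono fun x hx => ?_)
        dsimp only
        rw [mul_mul_mul_comm, ← ENNReal.mul_rpow_of_nonneg _ _ (by norm_num), hx,
          ENNReal.one_rpow, mul_one]
    _ ≤ _ := ENNReal.lintegral_mul_le_Lp_mul_Lq volume Real.HolderConjugate.two_two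
        (ha.mul (hw.ennreal_ofReal.pow_const _).aemeasurable)
        (hb.mul (hσ.ennreal_ofReal.pow_const _).aemeasurable)

lemma ofReal_abs_toReal_comp {u : ℝ → ℝ≥0∞} (hu : ∀ x, u x ≠ ⊤) :
    (fun x => ENNReal.ofReal |(u x).toReal|) = u :=
  funext fun x => by rw [abs_of_nonneg ENNReal.toReal_nonneg, ENNReal.ofReal_toReal (hu x)]

lemma le_Mopnorm {σ : ℝ → ℝ} {u : ℝ → ℝ≥0∞} (hu : ∀ x, u x ≠ ⊤) (h : l2wENN σ u ≤ 1) :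
    l2wENN σ (MR u) ≤ Mopnorm σ := by
  have hf : (fun x => ENNReal.ofReal |(u x).toReal|) = u := ofReal_abs_toReal_comp hu
  refine le_iSup₂_of_le (f := fun f (_ : l2w σ f ≤ 1) => l2wENN σ (Mreal f))
    (fun x => (u x).toReal) ?_ ?_
  · change l2wENN σ (fun x => ENNReal.ofReal |(u x).toReal|) ≤ 1
    rwa [hf]
  · change l2wENN σ (MR u) ≤ l2wENN σ (MR fun x => ENNReal.ofReal |(u x).toReal|)
    rw [hf]

lemma l2wENN_MR_le {σ : ℝ → ℝ} (hM : Mopnorm σ ≠ ⊤) {u : ℝ → ℝ≥0∞} (hu : ∀ x, u x ≠ ⊤)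
    (hu2 : l2wENN σ u ≠ ⊤) : l2wENN σ (MR u) ≤ Mopnorm σ * l2wENN σ u := by
  have hscale : ∀ c : ℝ≥0∞, c ≠ ⊤ → c * l2wENN σ u ≤ 1 → c * l2wENN σ (MR u) ≤ Mopnorm σ := by
    intro c hc h
    rw [← l2wENN_const_mul σ hc, ← MR_const_mul hc]
    exact le_Mopnorm (fun x => ENNReal.mul_ne_top hc (hu x))
      (by rwa [l2wENN_const_mul σ hc])
  rcases eq_or_ne (l2wENN σ u) 0 with h0 | h0
  · -- every multiple of `u` lies in the unit ball
    rw [h0, mul_zero, nonpos_iff_eq_zero]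
    by_contra hne
    obtain ⟨n, hn⟩ := ENNReal.exists_nat_mul_gt hne hM
    exact (hscale n (ENNReal.natCast_ne_top n) (by simp [h0])).not_gt hn
  · rw [mul_comm]
    exact (ENNReal.inv_mul_le_iff h0 hu2).1 <|
      hscale _ (ENNReal.inv_ne_top.2 h0) (ENNReal.inv_mul_cancel h0 hu2).le

lemma ae_eq_zero_or_ae_pos_of_Mopnorm_ne_top {w σ : ℝ → ℝ} (hw : 0 ≤ w) (hwm : Measurable w)
    (hσ : σ = fun x => (w x)⁻¹) (hM : Mopnorm σ ≠ ⊤) :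
    (∀ᵐ x, w x = 0) ∨ ∀ᵐ x, 0 < w x := by
  have hσm : Measurable σ := hσ ▸ hwm.inv
  set Z := {x | w x = 0}
  have hZ : MeasurableSet Z := hwm (measurableSet_singleton 0)
  by_cases hZ0 : volume Z = 0
  · exact Or.inr <| (measure_eq_zero_iff_ae_notMem.1 hZ0).mono fun x hx => (hw x).lt_of_ne' hx
  left
  -- `σ = 0` on `Z`, so `1_Z` has norm zero although its maximal function is everywhere positive
  have hMZ : ∀ x, MR (Z.indicator 1) x ≠ 0 := MR_ne_zero (by rwa [lintegral_indicator_one hZ])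
  have hZσ : l2wENN σ (Z.indicator 1) = 0 := by
    rw [l2wENN_indicator_one σ hZ, setLIntegral_congr_fun hZ (g := 0) fun x (hx : w x = 0) => by
      simp [hσ, hx]]
    simp
  have h := l2wENN_MR_le hM (u := Z.indicator 1) (fun x => by by_cases hx : x ∈ Z <;> simp [hx])
    (by simp [hZσ])
  rw [hZσ, mul_zero, nonpos_iff_eq_zero, l2wENN, ENNReal.rpow_eq_zero_iff_of_pos (by norm_num),
    lintegral_eq_zero_iff (by fun_prop)] at h
  filter_upwards [h] with x hx
  simp only [Pi.zero_apply, mul_eq_zero, pow_eq_zero_iff, ne_eq, OfNat.ofNat_ne_zero,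
    not_false_eq_true, hMZ x, false_or, ENNReal.ofReal_eq_zero, hσ, inv_nonpos] at hx
  exact le_antisymm hx (hw x)

lemma one_le_Mopnorm {σ : ℝ → ℝ} (hσm : Measurable σ) (hσ : ∀ᵐ x, 0 < σ x) :
    1 ≤ Mopnorm σ := by
  rcases eq_or_ne (Mopnorm σ) ⊤ with hM | hM
  · simp [hM]
  set ν := volume.withDensity fun x => ENNReal.ofReal (σ x)
  obtain ⟨S, hS, hS0, hSt⟩ : ∃ S, MeasurableSet S ∧ 0 < ν S ∧ ν S < ⊤ := by
    refine ((stronglyMeasurable_const (b := (1 : ℝ))).finStronglyMeasurable ν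
      ).exists_measurableSet_measure_pos_lt_top fun h => ?_
    rw [EventuallyEq, ae_iff] at h
    simp only [Pi.zero_apply, one_ne_zero, not_false_eq_true, ofPred_true, ν,
      withDensity_apply _ MeasurableSet.univ, Measure.restrict_univ,
      lintegral_eq_zero_iff hσm.ennreal_ofReal] at h
    obtain ⟨x, hx, hx0⟩ := (hσ.and h).exists
    simp only [Pi.zero_apply, ENNReal.ofReal_eq_zero] at hx0
    linarith
  have hX : l2wENN σ (S.indicator 1) = ν S ^ (1/2 : ℝ) := by
    rw [l2wENN_indicator_one σ hS, withDensity_apply _ hS]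
  set X := l2wENN σ (S.indicator 1)
  have hX0 : X ≠ 0 := by rw [hX]; exact (ENNReal.rpow_pos hS0 hSt.ne).ne'
  have hXt : X ≠ ⊤ := by rw [hX]; exact ENNReal.rpow_ne_top_of_nonneg (by norm_num) hSt.ne
  have hle : ∀ᵐ x, S.indicator 1 x ≤ MR (S.indicator 1) x := by
    filter_upwards [ae_one_le_MR_indicator hS] with x hx
    by_cases hxS : x ∈ S <;> simp [hxS, hx]
  have hXN : X ≤ Mopnorm σ * X := (l2wENN_mono_ae σ hle).trans
    (l2wENN_MR_le hM (fun x => by by_cases hx : x ∈ S <;> simp [hx]) hXt)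
  rwa [← ENNReal.mul_le_mul_iff_left hX0 hXt, one_mul]

noncomputable def rubioDeFrancia (t : ℝ≥0∞) (g : ℝ → ℝ≥0∞) (x : ℝ) : ℝ≥0∞ :=
  ∑' k, t⁻¹ ^ k * MR^[k] g x

lemma tsum_inv_two_pow_mul (a : ℝ≥0∞) : ∑' k : ℕ, 2⁻¹ ^ k * a = 2 * a := by
  rw [ENNReal.tsum_mul_right, ENNReal.tsum_geometric, ENNReal.one_sub_inv_two, inv_inv]

lemma measurable_iterate_MR {g : ℝ → ℝ≥0∞} (hg : Measurable g) : ∀ k, Measurable (MR^[k] g)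
  | 0 => hg
  | k + 1 => by rw [Function.iterate_succ_apply']; exact measurable_MR _

lemma iterate_MR_le {g : ℝ → ℝ≥0∞} {C : ℝ≥0∞} (hg : ∀ x, g x ≤ C) : ∀ k x, MR^[k] g x ≤ C
  | 0 => hg
  | k + 1 => by rw [Function.iterate_succ_apply']; exact MR_le_of_le (iterate_MR_le hg k)

lemma le_rubioDeFrancia (t : ℝ≥0∞) (g : ℝ → ℝ≥0∞) (x : ℝ) : g x ≤ rubioDeFrancia t g x := by
  simpa [rubioDeFrancia] using ENNReal.le_tsum (f := fun k => t⁻¹ ^ k * MR^[k] g x) 0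

lemma rubioDeFrancia_ne_zero {t : ℝ≥0∞} (ht : t ≠ ⊤) {g : ℝ → ℝ≥0∞} (hg : ∫⁻ x, g x ≠ 0)
    (x : ℝ) : rubioDeFrancia t g x ≠ 0 := by
  refine (ENNReal.mul_pos (ENNReal.inv_ne_zero.2 ht) (MR_ne_zero hg x)).trans_le ?_ |>.ne'
  simpa [rubioDeFrancia] using ENNReal.le_tsum (f := fun k => t⁻¹ ^ k * MR^[k] g x) 1

lemma measurable_rubioDeFrancia (t : ℝ≥0∞) {g : ℝ → ℝ≥0∞} (hg : Measurable g) :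
    Measurable (rubioDeFrancia t g) :=
  Measurable.tsum fun k => (measurable_iterate_MR hg k).const_mul _

lemma rubioDeFrancia_le {t C : ℝ≥0∞} (ht : 2 ≤ t) {g : ℝ → ℝ≥0∞} (hg : ∀ x, g x ≤ C) (x : ℝ) :
    rubioDeFrancia t g x ≤ 2 * C :=
  calc rubioDeFrancia t g x ≤ ∑' k : ℕ, 2⁻¹ ^ k * C :=
        ENNReal.tsum_le_tsum fun k => by gcongr; exact iterate_MR_le hg k x
    _ = 2 * C := tsum_inv_two_pow_mul C

lemma MR_rubioDeFrancia_le {t : ℝ≥0∞} (ht0 : t ≠ 0) (htt : t ≠ ⊤) {g : ℝ → ℝ≥0∞}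
    (hg : Measurable g) (x : ℝ) : MR (rubioDeFrancia t g) x ≤ t * rubioDeFrancia t g x :=
  calc MR (rubioDeFrancia t g) x ≤ ∑' k, MR (fun y => t⁻¹ ^ k * MR^[k] g y) x :=
        MR_tsum_le (fun k => ((measurable_iterate_MR hg k).const_mul _).aemeasurable) x
    _ = t * ∑' k, t⁻¹ ^ (k + 1) * MR^[k + 1] g x := by
        rw [← ENNReal.tsum_mul_left]
        refine tsum_congr fun k => ?_
        rw [MR_const_mul (pow_ne_top (ENNReal.inv_ne_top.2 ht0)), Function.iterate_succ_apply',
          pow_succ, ← mul_assoc, mul_comm t, mul_assoc _ t⁻¹, ENNReal.inv_mul_cancel ht0 htt,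
          mul_one]
    _ ≤ t * rubioDeFrancia t g x := by
        gcongr
        exact ENNReal.tsum_comp_le_tsum_of_injective (add_left_injective 1)
          fun k => t⁻¹ ^ k * MR^[k] g x

lemma l2wENN_rubioDeFrancia_le {σ : ℝ → ℝ} (hσ : Measurable σ) (hM0 : Mopnorm σ ≠ 0)
    (hM : Mopnorm σ ≠ ⊤) {g : ℝ → ℝ≥0∞} {C : ℝ≥0∞} (hg : Measurable g) (hC : C ≠ ⊤)
    (hgC : ∀ x, g x ≤ C) (hg2 : l2wENN σ g ≠ ⊤) :
    l2wENN σ (rubioDeFrancia (2 * Mopnorm σ) g) ≤ 2 * l2wENN σ g := by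
  set N := Mopnorm σ
  have hiter : ∀ k, l2wENN σ (MR^[k] g) ≤ N ^ k * l2wENN σ g := by
    intro k
    induction k with
    | zero => simp
    | succ k ih =>
      rw [Function.iterate_succ_apply', pow_succ', mul_assoc]
      refine (l2wENN_MR_le hM (fun x => ne_top_of_le_ne_top hC (iterate_MR_le hgC k x))
        (ne_top_of_le_ne_top (ENNReal.mul_ne_top (pow_ne_top hM) hg2) ih)).trans ?_
      gcongr
  have hinv : (2 * N)⁻¹ ≠ ⊤ := ENNReal.inv_ne_top.2 (mul_ne_zero two_ne_zero hM0)
  calc l2wENN σ (rubioDeFrancia (2 * N) g)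
      ≤ ∑' k, l2wENN σ (fun x => (2 * N)⁻¹ ^ k * MR^[k] g x) :=
        l2wENN_tsum_le hσ fun k => (measurable_iterate_MR hg k).const_mul _
    _ = ∑' k, (2 * N)⁻¹ ^ k * l2wENN σ (MR^[k] g) :=
        tsum_congr fun k => l2wENN_const_mul σ (pow_ne_top hinv) _
    _ ≤ ∑' k, (2 * N)⁻¹ ^ k * (N ^ k * l2wENN σ g) := by gcongr with k; exact hiter k
    _ = ∑' k : ℕ, 2⁻¹ ^ k * l2wENN σ g := by
        refine tsum_congr fun k => ?_
        rw [← mul_assoc, ← mul_pow,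
          ENNReal.mul_inv (Or.inl two_ne_zero) (Or.inl ENNReal.ofNat_ne_top), mul_assoc,
          ENNReal.inv_mul_cancel hM0 hM, mul_one]
    _ = 2 * l2wENN σ g := tsum_inv_two_pow_mul _

lemma ofReal_mul_setLIntegral_le_phiH {v : ℝ → ℝ≥0∞} {t : ℝ≥0∞} (hv : ∀ x, v x ≠ ⊤)
    (hMv : ∀ x, MR v x ≤ t * v x) {f : ℝ → ℝ} (hf : ∫⁻ x, ENNReal.ofReal |f x| * v x ≤ 1)
    {α : ℝ} (hα : 0 < α) :
    ENNReal.ofReal α * ∫⁻ x in {x | α < |hilbert f x|}, v x ≤ phiH t := by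
  set u : ℝ → ℝ := fun x => (v x).toReal
  have hu : (fun x => ENNReal.ofReal |u x|) = v := ofReal_abs_toReal_comp hv
  have huv : ∀ x, ENNReal.ofReal (u x) = v x := fun x => ENNReal.ofReal_toReal (hv x)
  have hA1 : A1const u ≤ t := essSup_le_of_ae_le t <| ae_of_all _ fun x => by
    simp only [Mreal, hu, huv]
    exact ENNReal.div_le_of_le_mul (hMv x)
  have hl1 : l1w u f ≤ 1 := by simpa only [l1w, huv] using hf
  calc ENNReal.ofReal α * ∫⁻ x in {x | α < |hilbert f x|}, v x
      = ENNReal.ofReal α * ∫⁻ x in {x | α < |hilbert f x|}, ENNReal.ofReal (u x) := by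
        simp only [huv]
    _ ≤ weakL1norm u (hilbert f) := le_iSup₂_of_le (f := fun α (_ : 0 < α) => _) α hα le_rfl
    _ ≤ Hopnorm u :=
        le_iSup₂_of_le (f := fun f (_ : l1w u f ≤ 1) => weakL1norm u (hilbert f)) f hl1 le_rfl
    _ ≤ phiH t := le_iSup₂_of_le (f := fun w (_ : 0 ≤ w) => ⨆ (_ : A1const w ≤ t), Hopnorm w) u
        (fun x => ENNReal.toReal_nonneg) (le_iSup_of_le hA1 le_rfl)

lemma ofReal_mul_setLIntegral_le_phiH_mul {v : ℝ → ℝ≥0∞} {t : ℝ≥0∞} (hv : ∀ x, v x ≠ ⊤)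
    (hMv : ∀ x, MR v x ≤ t * v x) {f : ℝ → ℝ} (hL0 : ∫⁻ x, ENNReal.ofReal |f x| * v x ≠ 0)
    (hLt : ∫⁻ x, ENNReal.ofReal |f x| * v x ≠ ⊤) {α : ℝ} (hα : 0 < α) :
    ENNReal.ofReal α * ∫⁻ x in {x | α < |hilbert f x|}, v x ≤
      phiH t * ∫⁻ x, ENNReal.ofReal |f x| * v x := by
  set L := ∫⁻ x, ENNReal.ofReal |f x| * v x
  have hLinv : L⁻¹ ≠ ⊤ := ENNReal.inv_ne_top.2 hL0
  have h := ofReal_mul_setLIntegral_le_phiH (v := fun x => L⁻¹ * v x) (t := t)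
    (fun x => ENNReal.mul_ne_top hLinv (hv x))
    (fun x => by
      rw [MR_const_mul hLinv, mul_left_comm t]
      exact mul_le_mul_of_nonneg_left (hMv x) zero_le) (f := f) ?_ hα
  · rw [lintegral_const_mul' _ _ hLinv, mul_left_comm, ENNReal.inv_mul_le_iff hL0 hLt] at h
    rwa [mul_comm L] at h
  · simp_rw [mul_left_comm _ L⁻¹]
    rw [lintegral_const_mul' _ _ hLinv, ENNReal.inv_mul_cancel hL0 hLt]

lemma ofReal_mul_setLIntegral_hilbert_le {w σ : ℝ → ℝ} (hwm : Measurable w)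
    (hσ : σ = fun x => (w x)⁻¹) (hwpos : ∀ᵐ x, 0 < w x) (hN : 1 ≤ Mopnorm σ)
    (hM : Mopnorm σ ≠ ⊤) {f : ℝ → ℝ} (hfm : Measurable f) (hf0 : ¬f =ᵐ[volume] 0)
    (hf : l2w w f ≠ ⊤) {g : ℝ → ℝ≥0∞} {C : ℝ≥0∞} (hgm : Measurable g) (hC : C ≠ ⊤)
    (hgC : ∀ x, g x ≤ C) (hg2 : l2wENN σ g ≠ ⊤) {α : ℝ} (hα : 0 < α) :
    ENNReal.ofReal α * ∫⁻ x in {x | α < |hilbert f x|}, g x ≤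
      2 * phiH (2 * Mopnorm σ) * l2w w f * l2wENN σ g := by
  have hσm : Measurable σ := hσ ▸ hwm.inv
  set N := Mopnorm σ
  have hN0 : N ≠ 0 := (one_pos.trans_le hN).ne'
  have ht0 : 2 * N ≠ 0 := mul_ne_zero two_ne_zero hN0
  have htt : 2 * N ≠ ⊤ := ENNReal.mul_ne_top ENNReal.ofNat_ne_top hM
  by_cases hg0 : ∫⁻ x, g x = 0
  · rw [nonpos_iff_eq_zero.1 ((setLIntegral_le_lintegral _ _).trans hg0.le), mul_zero]
    exact zero_le
  set R := rubioDeFrancia (2 * N) g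
  have hRm : Measurable R := measurable_rubioDeFrancia _ hgm
  have hRt : ∀ x, R x ≠ ⊤ := fun x => ne_top_of_le_ne_top
    (ENNReal.mul_ne_top ENNReal.ofNat_ne_top hC)
    (rubioDeFrancia_le (by simpa using mul_le_mul_right hN 2) hgC x)
  have hR0 : ∀ x, R x ≠ 0 := rubioDeFrancia_ne_zero htt hg0
  set L := ∫⁻ x, ENNReal.ofReal |f x| * R x
  have hL : L ≤ l2w w f * (2 * l2wENN σ g) := by
    refine (lintegral_mul_le_l2wENN_mul hwm hσm ?_ hfm.abs.ennreal_ofReal.aemeasurable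
      hRm.aemeasurable).trans ?_
    · filter_upwards [hwpos] with x hx
      rw [hσ, ← ENNReal.ofReal_mul hx.le, mul_inv_cancel₀ hx.ne', ENNReal.ofReal_one]
    · exact mul_le_mul_of_nonneg_left (l2wENN_rubioDeFrancia_le hσm hN0 hM hgm hC hgC hg2)
        zero_le
  have hL0 : L ≠ 0 := by
    rw [Ne, lintegral_eq_zero_iff (by fun_prop)]
    refine fun h => hf0 (h.mono fun x hx => ?_)
    simpa [hR0 x] using hx
  have hLt : L ≠ ⊤ := ne_top_of_le_ne_top
    (ENNReal.mul_ne_top hf (ENNReal.mul_ne_top ENNReal.ofNat_ne_top hg2)) hL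
  calc ENNReal.ofReal α * ∫⁻ x in {x | α < |hilbert f x|}, g x
      ≤ ENNReal.ofReal α * ∫⁻ x in {x | α < |hilbert f x|}, R x := by
        gcongr with x
        exact le_rubioDeFrancia _ _ x
    _ ≤ phiH (2 * N) * L :=
        ofReal_mul_setLIntegral_le_phiH_mul hRt (MR_rubioDeFrancia_le ht0 htt hgm) hL0 hLt hα
    _ ≤ phiH (2 * N) * (l2w w f * (2 * l2wENN σ g)) := by gcongr
    _ = 2 * phiH (2 * N) * l2w w f * l2wENN σ g := by ring

lemma ofReal_sq_mul_ofReal_inv (a : ℝ) :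
    ENNReal.ofReal a ^ 2 * ENNReal.ofReal a⁻¹ = ENNReal.ofReal a := by
  rcases le_or_gt a 0 with ha | ha
  · simp [ENNReal.ofReal_of_nonpos ha]
  · rw [← ENNReal.ofReal_pow ha.le, ← ENNReal.ofReal_mul (by positivity)]
    congr 1
    field_simp

lemma mul_rpow_half_le_of_mul_le {a c K : ℝ≥0∞} (ha : a ≠ ⊤)
    (h : c * a ≤ K * a ^ (1/2 : ℝ)) : c * a ^ (1/2 : ℝ) ≤ K := by
  rcases eq_or_ne a 0 with h0 | h0
  · simp [h0]
  rwa [← ENNReal.mul_le_mul_iff_left (ENNReal.rpow_pos (pos_iff_ne_zero.2 h0) ha).ne'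
    (ENNReal.rpow_ne_top_of_nonneg (by norm_num : (0 : ℝ) ≤ 1/2) ha), mul_assoc, ← ENNReal.rpow_add _ _ h0 ha,
    add_halves, ENNReal.rpow_one]

def truncSet (w : ℝ → ℝ) (E : Set ℝ) (n : ℕ) : Set ℝ :=
  toMeasurable volume E ∩ (Icc (-n : ℝ) n ∩ {x | w x ≤ n})

lemma measurableSet_truncSet {w : ℝ → ℝ} (hwm : Measurable w) (E : Set ℝ) (n : ℕ) :
    MeasurableSet (truncSet w E n) :=
  (measurableSet_toMeasurable _ _).inter (measurableSet_Icc.inter (hwm measurableSet_Iic))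

lemma setLIntegral_eq_iSup_truncSet (w : ℝ → ℝ) (E : Set ℝ) :
    ∫⁻ x in E, ENNReal.ofReal (w x) = ⨆ n, ∫⁻ x in truncSet w E n, ENNReal.ofReal (w x) := by
  have hmono : Monotone (truncSet w E) := fun m n hmn => by
    have h : (m : ℝ) ≤ n := by exact_mod_cast hmn
    exact inter_subset_inter_right _ (inter_subset_inter (Icc_subset_Icc (by linarith) h)
      fun x (hx : w x ≤ m) => hx.trans h)
  have hunion : ⋃ n, truncSet w E n = toMeasurable volume E := by
    unfold truncSet
    rw [← inter_iUnion, inter_eq_left]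
    intro x _
    obtain ⟨n, hn⟩ := exists_nat_ge (max |x| (w x))
    exact mem_iUnion.2 ⟨n, abs_le.1 ((le_max_left _ _).trans hn), (le_max_right _ _).trans hn⟩
  rw [← Measure.restrict_toMeasurable_of_sFinite, ← hunion,
    setLIntegral_iUnion_of_directed _ hmono.directed_le]

lemma mul_rpow_half_setLIntegral_le {w σ : ℝ → ℝ} (hwm : Measurable w)
    (hσ : σ = fun x => (w x)⁻¹) {E : Set ℝ} {c K : ℝ≥0∞}
    (h : ∀ (g : ℝ → ℝ≥0∞) (C : ℝ≥0∞), Measurable g → C ≠ ⊤ → (∀ x, g x ≤ C) →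
      l2wENN σ g ≠ ⊤ → c * ∫⁻ x in E, g x ≤ K * l2wENN σ g) :
    c * (∫⁻ x in E, ENNReal.ofReal (w x)) ^ (1/2 : ℝ) ≤ K := by
  have hsup (A : ℕ → ℝ≥0∞) : (⨆ n, A n) ^ (1/2 : ℝ) = ⨆ n, A n ^ (1/2 : ℝ) :=
    (ENNReal.orderIsoRpow (1/2) (by norm_num)).map_iSup A
  rw [setLIntegral_eq_iSup_truncSet, hsup, ENNReal.mul_iSup]
  refine iSup_le fun n => ?_
  set B := truncSet w E n
  have hB : MeasurableSet B := measurableSet_truncSet hwm E n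
  set A := ∫⁻ x in B, ENNReal.ofReal (w x)
  set g := B.indicator fun x => ENNReal.ofReal (w x)
  have hgE : ∫⁻ x in E, g x = A := by
    rw [← Measure.restrict_toMeasurable_of_sFinite, lintegral_indicator hB,
      Measure.restrict_restrict hB, inter_eq_left.2 fun x hx => hx.1]
  have hg2 : l2wENN σ g = A ^ (1/2 : ℝ) := by
    rw [l2wENN, show A = ∫⁻ x, g x from (lintegral_indicator hB _).symm]
    congr 2 with x
    by_cases hx : x ∈ B <;> simp [g, hx, hσ, ofReal_sq_mul_ofReal_inv]
  have hAt : A ≠ ⊤ := ne_of_lt <|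
    calc A ≤ ∫⁻ _ in B, ENNReal.ofReal n :=
          setLIntegral_mono' hB fun x hx => ENNReal.ofReal_le_ofReal hx.2.2
      _ ≤ ∫⁻ _ in Icc (-n : ℝ) n, ENNReal.ofReal n := lintegral_mono_set fun x hx => hx.2.1
      _ = ENNReal.ofReal n * volume (Icc (-n : ℝ) n) := setLIntegral_const _ _
      _ < ⊤ := ENNReal.mul_lt_top ENNReal.ofReal_lt_top measure_Icc_lt_top
  have hgA := h g (ENNReal.ofReal n) (hwm.ennreal_ofReal.indicator hB) ENNReal.ofReal_ne_top
    (fun x => indicator_le (fun x hx => ENNReal.ofReal_le_ofReal hx.2.2) x)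
    (by rw [hg2]; exact ENNReal.rpow_ne_top_of_nonneg (by norm_num) hAt)
  rw [hgE, hg2] at hgA
  exact mul_rpow_half_le_of_mul_le hAt hgA

lemma hilbert_eq_zero_of_ae_eq_zero {f : ℝ → ℝ} (h : f =ᵐ[volume] 0) : hilbert f = 0 := by
  funext x
  have h0 : (fun ε : ℝ => ∫ y in {y | ε < |x - y|}, f y / (x - y)) = fun _ => 0 :=
    funext fun ε => integral_eq_zero_of_ae (ae_restrict_of_ae (h.mono fun y hy => by simp [hy]))
  simp only [hilbert, h0]
  exact tendsto_const_nhds.limUnder_eq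

lemma weakL2norm_eq_zero {w g : ℝ → ℝ}
    (h : ∀ α > 0, ∫⁻ x in {x | α < |g x|}, ENNReal.ofReal (w x) = 0) : weakL2norm w g = 0 :=
  le_antisymm (iSup₂_le fun α hα => by simp [h α hα]) zero_le

/-- Extrapolated weak type `(2,2)` bound:
`‖Hf‖_{L^{2,∞}(w)} ≤ 2 φ_H(2‖M‖_{L²(σ)→L²(σ)}) ‖f‖_{L²(w)}` where `σ = w⁻¹`. -/
theorem weakL2_hilbert_bound (w σ : ℝ → ℝ) (hw : 0 ≤ w) (hwm : Measurable w)
    (hσ : σ = fun x => (w x)⁻¹) (hM : Mopnorm σ < ⊤)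
    (f : ℝ → ℝ) (hfm : Measurable f) (hf : l2w w f < ⊤) :
    weakL2norm w (hilbert f) ≤ 2 * phiH (2 * Mopnorm σ) * l2w w f := by
  by_cases hf0 : f =ᵐ[volume] 0
  · rw [hilbert_eq_zero_of_ae_eq_zero hf0,
      weakL2norm_eq_zero fun α hα => by simp [not_lt.2 hα.le]]
    exact zero_le
  obtain hw0 | hwpos := ae_eq_zero_or_ae_pos_of_Mopnorm_ne_top hw hwm hσ hM.ne
  · rw [weakL2norm_eq_zero fun α _ => (lintegral_congr_ae (g := 0)
      (ae_restrict_of_ae (hw0.mono fun x hx => by simp [hx]))).trans lintegral_zero]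
    exact zero_le
  have hN : 1 ≤ Mopnorm σ :=
    one_le_Mopnorm (hσ ▸ hwm.inv) (hwpos.mono fun x hx => by simpa [hσ] using hx)
  refine iSup₂_le fun α hα => mul_rpow_half_setLIntegral_le hwm hσ fun g C hgm hC hgC hg2 => ?_
  exact ofReal_mul_setLIntegral_hilbert_le hwm hσ hwpos hN hM.ne hfm hf0 hf.ne hgm hC hgC hg2 hα
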